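/- arXiv:1701.07962 — 3 statements merged into one kernel-verified Lean document; each statement's English description precedes it below -/
import Mathlib

section
/- (Change of variable formula.) Let T be a compact metric space, X a Hilbert space, R ∈ L(X), ω : T → T continuous, and μ ∈ cabv(X). For every continuous f : T → X one has ∫ f d(R ∘ ω(μ)) = ∫ (R* ∘ f ∘ ω) dμ, where the integral of a simple function ∑ φ_{A_i} x_i against μ is ∑ ⟨x_i, μ(A_i)⟩ and is extended by uniform limits to totally measurable functions. -/
open MeasureTheory Filter Topology Set

noncomputable section

/-- A finite Borel partition of the whole space. -/
def IsBorelPartition {T : Type*} [MeasurableSpace T] (P : Finset (Set T)) : Prop :=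
  (∀ A ∈ P, MeasurableSet A) ∧ ((P : Set (Set T)).PairwiseDisjoint id) ∧
    ⋃₀ (P : Set (Set T)) = Set.univ

/-- Total variation of a vector measure, as an extended real. -/
def evar {T X : Type*} [MeasurableSpace T] [NormedAddCommGroup X]
    (μ : VectorMeasure T X) : ENNReal :=
  ⨆ (P : Finset (Set T)) (_ : IsBorelPartition P), ∑ A ∈ P, (‖μ A‖₊ : ENNReal)

/-- Bounded variation. -/
def BddVar {T X : Type*} [MeasurableSpace T] [NormedAddCommGroup X]
    (μ : VectorMeasure T X) : Prop := evar μ ≠ ⊤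

/-- The variational norm. -/
def varNorm {T X : Type*} [MeasurableSpace T] [NormedAddCommGroup X]
    (μ : VectorMeasure T X) : ℝ := (evar μ).toReal

/-- Composition of a bounded operator with a vector measure. -/
def opComp {T X Y 𝕜 : Type*} [MeasurableSpace T] [NontriviallyNormedField 𝕜]
    [NormedAddCommGroup X] [NormedSpace 𝕜 X] [NormedAddCommGroup Y] [NormedSpace 𝕜 Y]
    (R : X →L[𝕜] Y) (μ : VectorMeasure T X) : VectorMeasure T Y :=
  μ.mapRange R.toLinearMap.toAddMonoidHom R.continuous

/-- The Markov-type operator generated by operators `R i` and maps `ω i`. -/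
def markovH {T X 𝕜 : Type*} [MeasurableSpace T] [NontriviallyNormedField 𝕜]
    [NormedAddCommGroup X] [NormedSpace 𝕜 X] {M : ℕ}
    (R : Fin M → X →L[𝕜] X) (ω : Fin M → T → T) (μ : VectorMeasure T X) :
    VectorMeasure T X :=
  ∑ i, opComp (R i) (μ.map (ω i))

/-- Simple (finitely-valued, measurable) function. -/
def IsSimpleFn {T X : Type*} [MeasurableSpace T] (g : T → X) : Prop :=
  (Set.range g).Finite ∧ ∀ x : X, MeasurableSet (g ⁻¹' {x})

/-- Integral of a simple function against a vector measure. -/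
def simpleIntegral (𝕜 : Type*) {T X : Type*} [RCLike 𝕜] [MeasurableSpace T]
    [NormedAddCommGroup X] [InnerProductSpace 𝕜 X] (μ : VectorMeasure T X) (g : T → X) : 𝕜 :=
  ∑ᶠ x : X, (inner 𝕜 x (μ (g ⁻¹' {x})) : 𝕜)

/-- `I` is the (uniform, sesquilinear) integral of `f` with respect to `μ`. -/
def HasUIntegral (𝕜 : Type*) {T X : Type*} [RCLike 𝕜] [MeasurableSpace T]
    [NormedAddCommGroup X] [InnerProductSpace 𝕜 X] (μ : VectorMeasure T X)
    (f : T → X) (I : 𝕜) : Prop :=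
  ∀ g : ℕ → T → X, (∀ n, IsSimpleFn (g n)) → TendstoUniformly g f atTop →
    Tendsto (fun n => simpleIntegral 𝕜 μ (g n)) atTop (nhds I)

/-- The uniform integral (defaulting to `0` when it does not exist). -/
def uIntegral (𝕜 : Type*) {T X : Type*} [RCLike 𝕜] [MeasurableSpace T]
    [NormedAddCommGroup X] [InnerProductSpace 𝕜 X] (μ : VectorMeasure T X) (f : T → X) : 𝕜 :=
  letI := Classical.propDecidable
  if h : ∃ I, HasUIntegral 𝕜 μ f I then h.choose else 0

/-- The Monge–Kantorovich norm. -/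
def mkNorm (𝕜 : Type*) {T X : Type*} [RCLike 𝕜] [PseudoMetricSpace T] [MeasurableSpace T]
    [NormedAddCommGroup X] [InnerProductSpace 𝕜 X] (μ : VectorMeasure T X) : ℝ :=
  sSup {s | ∃ (f : T → X) (L : NNReal), LipschitzWith L f ∧ (∀ t, ‖f t‖ + (L : ℝ) ≤ 1) ∧
    s = ‖uIntegral 𝕜 μ f‖}

/-- The modified Monge–Kantorovich norm. -/
def mkNormStar (𝕜 : Type*) {T X : Type*} [RCLike 𝕜] [PseudoMetricSpace T] [MeasurableSpace T]
    [NormedAddCommGroup X] [InnerProductSpace 𝕜 X] (μ : VectorMeasure T X) : ℝ :=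
  sSup {s | ∃ f : T → X, LipschitzWith 1 f ∧ s = ‖uIntegral 𝕜 μ f‖}

/-- The `X`-valued Dirac measure `B ↦ δ_t(B) • x`. -/
def diracVM {T : Type*} [MeasurableSpace T] {𝕜 X : Type*} [RCLike 𝕜]
    [NormedAddCommGroup X] [NormedSpace 𝕜 X] (t : T) (x : X) : VectorMeasure T X :=
  ((Measure.dirac t).toSignedMeasure).mapRange
    { toFun := fun c : ℝ => (c : 𝕜) • x
      map_zero' := by simp
      map_add' := fun a b => by push_cast; rw [add_smul] }
    (RCLike.continuous_ofReal.smul continuous_const)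

end

open scoped InnerProductSpace

/-! On simple functions the formula is finite bookkeeping: the fibre of `g` over `y` has
`R ∘ ω(μ)`-measure `R (μ (ω⁻¹ (g⁻¹ {y})))`, and `⟪y, R x⟫ = ⟪R* y, x⟫`. A continuous `f` on a
compact space is a uniform limit of simple functions `g n`. Since `μ` has bounded variation, simple
integrals against `μ` are `varNorm μ`-Lipschitz for the uniform distance, so the integrals of
`R* ∘ g n ∘ ω` converge, to a limit independent of the approximating sequence. The integral
against `R ∘ ω(μ)` then follows by transport: every simple approximation `g` of `f` yields the
simple approximation `R* ∘ g ∘ ω` of `R* ∘ f ∘ ω`, with the same integrals. -/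

section SimpleFunctions

variable {T β X : Type*} [MeasurableSpace T]

theorem MeasureTheory.SimpleFunc.isSimpleFn (G : SimpleFunc T X) : IsSimpleFn G :=
  ⟨G.finite_range, G.measurableSet_fiber⟩

theorem IsSimpleFn.exists_simpleFunc {g : T → X} (hg : IsSimpleFn g) :
    ∃ G : SimpleFunc T X, ⇑G = g :=
  ⟨⟨g, hg.2, hg.1⟩, rfl⟩

theorem exists_simpleFunc_forall_dist_lt [TopologicalSpace T] [OpensMeasurableSpace T]
    [CompactSpace T] [PseudoMetricSpace X] [Nonempty X] {f : T → X} (hf : Continuous f)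
    {ε : ℝ} (hε : 0 < ε) : ∃ G : SimpleFunc T X, ∀ t, dist (f t) (G t) < ε := by
  obtain ⟨s, -, hs, hcover⟩ := finite_cover_balls_of_compact (isCompact_range hf) hε
  classical
  lift s to Finset X using hs
  suffices ∀ s : Finset X, ∃ G : SimpleFunc T X, ∀ t, f t ∈ ⋃ x ∈ s, Metric.ball x ε →
      dist (f t) (G t) < ε by
    obtain ⟨G, hG⟩ := this s
    exact ⟨G, fun t => hG t (hcover (mem_range_self t))⟩
  intro s
  induction s using Finset.induction_on with
  | empty => exact ⟨.const T (Classical.arbitrary X), by simp⟩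
  | insert a s _ ih =>
    obtain ⟨G, hG⟩ := ih
    refine ⟨.piecewise (f ⁻¹' Metric.ball a ε) (Metric.isOpen_ball.preimage hf).measurableSet
      (.const T a) G, fun t ht => ?_⟩
    by_cases ha : f t ∈ Metric.ball a ε
    · simpa [SimpleFunc.piecewise_apply, ha] using Metric.mem_ball.1 ha
    · rw [Finset.set_biUnion_insert, mem_union] at ht
      simpa [SimpleFunc.piecewise_apply, ha] using hG t (ht.resolve_left ha)

theorem exists_simpleFunc_tendstoUniformly [TopologicalSpace T] [OpensMeasurableSpace T]
    [CompactSpace T] [PseudoMetricSpace X] [Nonempty X] {f : T → X} (hf : Continuous f) :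
    ∃ g : ℕ → SimpleFunc T X, TendstoUniformly (fun n => ⇑(g n)) f atTop := by
  choose g hg using fun n : ℕ =>
    exists_simpleFunc_forall_dist_lt hf (Nat.one_div_pos_of_nat (n := n))
  refine ⟨g, Metric.tendstoUniformly_iff.2 fun ε hε => ?_⟩
  filter_upwards [tendsto_one_div_add_atTop_nhds_zero_nat.eventually (gt_mem_nhds hε)]
    with n hn t using (hg n t).trans hn

theorem MeasureTheory.SimpleFunc.sum_vectorMeasure_preimage_singleton [AddCommMonoid X]
    [TopologicalSpace X] [T2Space X] (ν : VectorMeasure T X) (G : SimpleFunc T β) (s : Finset β) :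
    ∑ b ∈ s, ν (G ⁻¹' {b}) = ν (G ⁻¹' ↑s) := by
  rw [← biUnion_preimage_singleton]
  exact (ν.of_biUnion_finset (pairwiseDisjoint_fiber G _) fun b _ => G.measurableSet_fiber b).symm

end SimpleFunctions

section Variation

variable {T β X : Type*} [MeasurableSpace T] [NormedAddCommGroup X] (ν : VectorMeasure T X)

theorem sum_norm_le_varNorm (hν : BddVar ν) {P : Finset (Set T)} (hP : IsBorelPartition P) :
    ∑ A ∈ P, ‖ν A‖ ≤ varNorm ν := by
  have hle : ∑ A ∈ P, (‖ν A‖₊ : ENNReal) ≤ evar ν := le_iSup₂_of_le P hP le_rfl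
  simpa [varNorm, ENNReal.toReal_sum] using ENNReal.toReal_mono hν hle

theorem isBorelPartition_image_preimage_singleton (G : SimpleFunc T β) :
    IsBorelPartition (G.range.image fun b => G ⁻¹' {b}) := by
  classical
  refine ⟨?_, ?_, ?_⟩
  · simp [G.measurableSet_fiber]
  · intro A hA B hB hAB
    obtain ⟨b, -, rfl⟩ := Finset.mem_image.1 hA
    obtain ⟨b', -, rfl⟩ := Finset.mem_image.1 hB
    exact pairwiseDisjoint_fiber G univ (mem_univ b) (mem_univ b') (fun h => hAB (h ▸ rfl))
  · refine eq_univ_of_forall fun t => mem_sUnion.2 ⟨G ⁻¹' {G t}, ?_, rfl⟩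
    exact Finset.mem_coe.2 (Finset.mem_image_of_mem _ (G.mem_range_self t))

theorem sum_norm_preimage_singleton_le_varNorm (hν : BddVar ν) (G : SimpleFunc T β) :
    ∑ b ∈ G.range, ‖ν (G ⁻¹' {b})‖ ≤ varNorm ν := by
  classical
  have hinj : Set.InjOn (fun b => G ⁻¹' {b}) G.range := by
    intro b hb b' _ hbb'
    obtain ⟨t, rfl⟩ := SimpleFunc.mem_range.1 hb
    exact hbb'.subset rfl
  rw [← Finset.sum_image (f := fun A => ‖ν A‖) hinj]
  exact sum_norm_le_varNorm ν hν (isBorelPartition_image_preimage_singleton G)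

end Variation

section SimpleIntegral

variable {T β X : Type*} [MeasurableSpace T] {𝕜 : Type*} [RCLike 𝕜] [NormedAddCommGroup X]
  [InnerProductSpace 𝕜 X] (ν : VectorMeasure T X)

theorem simpleIntegral_eq_sum_range (G : SimpleFunc T X) :
    simpleIntegral 𝕜 ν G = ∑ x ∈ G.range, ⟪x, ν (G ⁻¹' {x})⟫_𝕜 := by
  refine finsum_eq_sum_of_support_subset _ fun x hx => ?_
  by_contra hxG
  rw [Finset.mem_coe, ← G.preimage_eq_empty_iff] at hxG
  simp [hxG] at hx

theorem simpleIntegral_map_eq_sum (G : SimpleFunc T β) {s : Finset β} (hs : G.range ⊆ s)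
    (φ : β → X) : simpleIntegral 𝕜 ν (G.map φ) = ∑ b ∈ s, ⟪φ b, ν (G ⁻¹' {b})⟫_𝕜 := by
  classical
  rw [simpleIntegral_eq_sum_range, SimpleFunc.range_map,
    Finset.sum_image' (fun b => ⟪φ b, ν (G ⁻¹' {b})⟫_𝕜)]
  · refine Finset.sum_subset hs fun b _ hb => ?_
    rw [(G.preimage_eq_empty_iff b).2 hb, ν.empty, inner_zero_right]
  · intro b _
    rw [SimpleFunc.map_preimage_singleton, ← G.sum_vectorMeasure_preimage_singleton, inner_sum]
    exact Finset.sum_congr rfl fun b' hb' => by rw [(Finset.mem_filter.1 hb').2]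

theorem norm_simpleIntegral_sub_le (hν : BddVar ν) (G H : SimpleFunc T X) {c : ℝ} (hc0 : 0 ≤ c)
    (hc : ∀ t, ‖G t - H t‖ ≤ c) :
    ‖simpleIntegral 𝕜 ν G - simpleIntegral 𝕜 ν H‖ ≤ c * varNorm ν := by
  set P := G.pair H
  have hP : ∀ p ∈ P.range, ‖p.1 - p.2‖ ≤ c := by
    intro p hp
    obtain ⟨t, rfl⟩ := SimpleFunc.mem_range.1 hp
    exact hc t
  have hG := simpleIntegral_map_eq_sum (𝕜 := 𝕜) ν P subset_rfl Prod.fst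
  have hH := simpleIntegral_map_eq_sum (𝕜 := 𝕜) ν P subset_rfl Prod.snd
  rw [SimpleFunc.map_fst_pair] at hG
  rw [SimpleFunc.map_snd_pair] at hH
  rw [hG, hH, ← Finset.sum_sub_distrib]
  calc ‖∑ p ∈ P.range, (⟪p.1, ν (P ⁻¹' {p})⟫_𝕜 - ⟪p.2, ν (P ⁻¹' {p})⟫_𝕜)‖
      ≤ ∑ p ∈ P.range, ‖p.1 - p.2‖ * ‖ν (P ⁻¹' {p})‖ := by
        refine (norm_sum_le _ _).trans (Finset.sum_le_sum fun p _ => ?_)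
        rw [← inner_sub_left]
        exact norm_inner_le_norm _ _
    _ ≤ ∑ p ∈ P.range, c * ‖ν (P ⁻¹' {p})‖ :=
        Finset.sum_le_sum fun p hp => mul_le_mul_of_nonneg_right (hP p hp) (norm_nonneg _)
    _ ≤ c * varNorm ν := by
        rw [← Finset.mul_sum]
        exact mul_le_mul_of_nonneg_left (sum_norm_preimage_singleton_le_varNorm ν hν P) hc0

end SimpleIntegral

section UniformIntegral

variable {T X : Type*} [MeasurableSpace T] {𝕜 : Type*} [RCLike 𝕜] [NormedAddCommGroup X]
  [InnerProductSpace 𝕜 X] {ν : VectorMeasure T X} {f : T → X}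

theorem tendsto_simpleIntegral_sub_simpleIntegral (hν : BddVar ν) {ι : Type*} {l : Filter ι}
    {g h : ι → SimpleFunc T X} (hg : TendstoUniformly (fun i => ⇑(g i)) f l)
    (hh : TendstoUniformly (fun i => ⇑(h i)) f l) :
    Tendsto (fun i => simpleIntegral 𝕜 ν (g i) - simpleIntegral 𝕜 ν (h i)) l (𝓝 0) := by
  rw [Metric.tendsto_nhds]
  intro ε hε
  set V := varNorm ν
  have hV : 0 ≤ V := ENNReal.toReal_nonneg
  set δ := ε / (2 * (V + 1))
  have hδ : 0 < δ := by positivity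
  filter_upwards [Metric.tendstoUniformly_iff.1 hg δ hδ, Metric.tendstoUniformly_iff.1 hh δ hδ]
    with i hgi hhi
  have hgh : ∀ t, ‖g i t - h i t‖ ≤ 2 * δ := fun t => by
    rw [← dist_eq_norm]
    linarith [dist_triangle_left (g i t) (h i t) (f t), hgi t, hhi t]
  calc dist (simpleIntegral 𝕜 ν (g i) - simpleIntegral 𝕜 ν (h i)) 0
      ≤ 2 * δ * V := by
        rw [dist_zero_right]
        exact norm_simpleIntegral_sub_le ν hν (g i) (h i) (by positivity) hgh
    _ < ε := by
        rw [show 2 * δ * V = ε * (V / (V + 1)) by simp only [δ]; field_simp]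
        exact mul_lt_of_lt_one_right hε ((div_lt_one (by positivity)).2 (lt_add_one V))

theorem hasUIntegral_of_tendsto (hν : BddVar ν) {g : ℕ → SimpleFunc T X}
    (hg : TendstoUniformly (fun n => ⇑(g n)) f atTop) {I : 𝕜}
    (hI : Tendsto (fun n => simpleIntegral 𝕜 ν (g n)) atTop (𝓝 I)) : HasUIntegral 𝕜 ν f I := by
  intro G hG hGf
  choose G' hG' using fun n => (hG n).exists_simpleFunc
  obtain rfl : (fun n => ⇑(G' n)) = G := funext hG'
  simpa using (tendsto_simpleIntegral_sub_simpleIntegral hν hGf hg).add hI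

theorem exists_hasUIntegral (hν : BddVar ν) {g : ℕ → SimpleFunc T X}
    (hg : TendstoUniformly (fun n => ⇑(g n)) f atTop) : ∃ I : 𝕜, HasUIntegral 𝕜 ν f I := by
  have hcauchy : CauchySeq fun n => simpleIntegral 𝕜 ν (g n) := by
    rw [cauchySeq_iff_tendsto_dist_atTop_0, ← prod_atTop_atTop_eq]
    simpa [dist_eq_norm] using (tendsto_simpleIntegral_sub_simpleIntegral (𝕜 := 𝕜) hν
      (fun u hu => (hg u hu).prod_inl atTop) (fun u hu => (hg u hu).prod_inr atTop)).norm
  obtain ⟨I, hI⟩ := cauchySeq_tendsto_of_complete hcauchy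
  exact ⟨I, hasUIntegral_of_tendsto hν hg hI⟩

end UniformIntegral

section ChangeOfVariable

variable {S T X Y : Type*} [MeasurableSpace S] [MeasurableSpace T] {𝕜 : Type*} [RCLike 𝕜]
  [NormedAddCommGroup X] [InnerProductSpace 𝕜 X] [NormedAddCommGroup Y] [InnerProductSpace 𝕜 Y]
  (R : X →L[𝕜] Y) {ω : S → T} {μ : VectorMeasure S X}

theorem opComp_apply (ν : VectorMeasure T X) (s : Set T) : opComp R ν s = R (ν s) := rfl

variable [CompleteSpace X] [CompleteSpace Y]

theorem simpleIntegral_opComp_map (hω : Measurable ω) (G : SimpleFunc T Y) :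
    simpleIntegral 𝕜 (opComp R (μ.map ω)) G =
      simpleIntegral 𝕜 μ ((G.comp ω hω).map (ContinuousLinearMap.adjoint R)) := by
  classical
  change simpleIntegral 𝕜 _ (G.map id) = _
  rw [simpleIntegral_map_eq_sum _ G subset_rfl,
    simpleIntegral_map_eq_sum _ _ (G.range_comp_subset_range hω)]
  refine Finset.sum_congr rfl fun y _ => ?_
  rw [opComp_apply, VectorMeasure.map_apply μ hω (G.measurableSet_fiber y),
    ContinuousLinearMap.adjoint_inner_left]
  rfl

theorem HasUIntegral.opComp_map (hω : Measurable ω) {f : T → Y} {I : 𝕜}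
    (h : HasUIntegral 𝕜 μ (fun s => ContinuousLinearMap.adjoint R (f (ω s))) I) :
    HasUIntegral 𝕜 (opComp R (μ.map ω)) f I := by
  intro g hg hgf
  choose G hG using fun n => (hg n).exists_simpleFunc
  obtain rfl : (fun n => ⇑(G n)) = g := funext hG
  simp_rw [simpleIntegral_opComp_map R hω]
  exact h _ (fun n => SimpleFunc.isSimpleFn _)
    ((ContinuousLinearMap.adjoint R).uniformContinuous.comp_tendstoUniformly (hgf.comp ω))

end ChangeOfVariable

/-- change of variable formula: for `R ∈ L(X)`, `ω : T → T` continuous and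
`μ ∈ cabv(X)`, every continuous `f : T → X` satisfies
`∫ f d(R ∘ ω(μ)) = ∫ (R* ∘ f ∘ ω) dμ` (both uniform integrals exist and are equal). -/
theorem change_of_variable
    {T : Type*} [MetricSpace T] [CompactSpace T] [MeasurableSpace T] [BorelSpace T]
    {𝕜 X : Type*} [RCLike 𝕜] [NormedAddCommGroup X] [InnerProductSpace 𝕜 X] [CompleteSpace X]
    (R : X →L[𝕜] X) (ω : T → T) (hω : Continuous ω)
    (μ : VectorMeasure T X) (hμ : BddVar μ) (f : T → X) (hf : Continuous f) :
    ∃ I : 𝕜, HasUIntegral 𝕜 (opComp R (μ.map ω)) f I ∧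
      HasUIntegral 𝕜 μ (fun t => ContinuousLinearMap.adjoint R (f (ω t))) I := by
  obtain ⟨g, hg⟩ := exists_simpleFunc_tendstoUniformly hf
  obtain ⟨I, hI⟩ := exists_hasUIntegral (𝕜 := 𝕜) hμ
    (g := fun n => ((g n).comp ω hω.measurable).map (ContinuousLinearMap.adjoint R))
    ((ContinuousLinearMap.adjoint R).uniformContinuous.comp_tendstoUniformly (hg.comp ω))
  exact ⟨I, hI.opComp_map R hω.measurable, hI⟩
end

section
/- Let H(μ) = ∑_{i=1}^M R_i ∘ ω_i(μ) be the Markov-type operator on cabv(X). If μ(T) = 0 then H(μ)(T) = ∑_{i=1}^M R_i(0) = 0, so H restricts to an operator H₀ on cabv(X,0) = {μ ∈ cabv(X) : μ(T) = 0}. Moreover, with respect to the modified Monge–Kantorovich norm ‖μ‖*_MK = sup{|∫ f dμ| : f is 1-Lipschitz from T to X}, one has ‖H₀(μ)‖*_MK ≤ (∑_{i=1}^M ‖R_i‖ r_i) ‖μ‖*_MK. -/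
open MeasureTheory Filter Topology Set

/-!
The sesquilinear integral of a simple function `g` against `μ` is `∑ₓ ⟪x, μ (g⁻¹{x})⟫`. It is
linear in `g` and bounded by `sup ‖g‖ * varNorm μ`, so the simple integrals of uniform
approximants of a continuous `f` form a Cauchy sequence and the uniform integral exists. Moving
`R i` across the inner product and pulling the cells back along `ω i` gives
`∫ g d(Hμ) = ∑ i, ∫ (R i)† ∘ g ∘ ω i dμ` for simple `g`, hence for every continuous `f`.
If `f` is 1-Lipschitz then `(R i)† ∘ f ∘ ω i` is `‖R i‖ r i`-Lipschitz; since `μ univ = 0` the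
integral ignores additive constants, and rescaling bounds each term by `‖R i‖ r i ‖μ‖*_MK`.
-/

open MeasureTheory Filter Topology Set
open scoped InnerProduct ComplexConjugate NNReal

section Variation

variable {T X : Type*} [MeasurableSpace T] [NormedAddCommGroup X]

theorem sum_norm_le_varNorm_s6 {μ : VectorMeasure T X} (hμ : BddVar μ) {ι : Type*} {s : Finset ι}
    {A : ι → Set T} (hA : ∀ i ∈ s, MeasurableSet (A i)) (hd : (s : Set ι).PairwiseDisjoint A) :
    ∑ i ∈ s, ‖μ (A i)‖ ≤ varNorm μ := by
  classical
  set P := insert (⋃ i ∈ s, A i)ᶜ (s.image A)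
  have hP : IsBorelPartition P := by
    refine ⟨?_, ?_, ?_⟩
    · simp only [P, Finset.forall_mem_insert, Finset.forall_mem_image]
      exact ⟨(Finset.measurableSet_biUnion s hA).compl, hA⟩
    · rw [Finset.coe_insert, Finset.coe_image]
      refine Set.PairwiseDisjoint.insert ?_ ?_
      · rintro _ ⟨i, hi, rfl⟩ _ ⟨j, hj, rfl⟩ hne
        exact hd hi hj fun h => hne (h ▸ rfl)
      · rintro _ ⟨j, hj, rfl⟩ -
        exact disjoint_compl_left_iff_subset.2 (subset_biUnion_of_mem (u := A) hj)
    · simp only [P, Finset.coe_insert, Finset.coe_image, sUnion_insert, sUnion_image]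
      exact compl_union_self _
  have hPμ : ∑ B ∈ P, ‖μ B‖ ≤ varNorm μ := by
    have := ENNReal.toReal_mono hμ
      (le_iSup₂ (f := fun P (_ : IsBorelPartition P) => ∑ B ∈ P, (‖μ B‖₊ : ENNReal)) P hP)
    simpa [varNorm, ENNReal.toReal_sum] using this
  calc ∑ i ∈ s, ‖μ (A i)‖ = ∑ B ∈ s.image A, ‖μ B‖ :=
        (Finset.sum_image_of_disjoint (g := fun B => ‖μ B‖) (by simp) hd).symm
    _ ≤ ∑ B ∈ P, ‖μ B‖ :=
        Finset.sum_le_sum_of_subset_of_nonneg (Finset.subset_insert _ _) fun _ _ _ => norm_nonneg _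
    _ ≤ varNorm μ := hPμ

end Variation

section SimpleFunctions

variable {T Y Z : Type*} [MeasurableSpace T] {g : T → Y}

theorem IsSimpleFn.measurableSet_preimage (hg : IsSimpleFn g) (B : Set Y) :
    MeasurableSet (g ⁻¹' B) := by
  have : g ⁻¹' B = ⋃ y ∈ B ∩ range g, g ⁻¹' {y} := by
    ext t
    simp
  rw [this]
  exact .biUnion (hg.1.subset inter_subset_right).countable fun y _ => hg.2 y

theorem IsSimpleFn.comp (hg : IsSimpleFn g) (φ : Y → Z) : IsSimpleFn (φ ∘ g) :=
  ⟨range_comp φ g ▸ hg.1.image φ, fun z => hg.measurableSet_preimage (φ ⁻¹' {z})⟩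

theorem IsSimpleFn.comp_measurable (hg : IsSimpleFn g) {ω : T → T} (hω : Measurable ω) :
    IsSimpleFn (g ∘ ω) :=
  ⟨hg.1.subset (range_comp_subset_range ω g), fun y => hω (hg.2 y)⟩

theorem IsSimpleFn.prodMk (hg : IsSimpleFn g) {h : T → Z} (hh : IsSimpleFn h) :
    IsSimpleFn fun t => (g t, h t) := by
  refine ⟨(hg.1.prod hh.1).subset (range_pair_subset g h), fun p => ?_⟩
  rw [← singleton_prod_singleton, mk_preimage_prod]
  exact (hg.2 p.1).inter (hh.2 p.2)

theorem MeasureTheory.SimpleFunc.isSimpleFn_s6 (g : SimpleFunc T Y) : IsSimpleFn g :=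
  ⟨g.finite_range, g.measurableSet_fiber⟩

end SimpleFunctions

theorem MeasureTheory.VectorMeasure.apply_preimage_eq_sum {T X Y : Type*} [MeasurableSpace T]
    [AddCommMonoid X] [TopologicalSpace X] [T2Space X] (μ : VectorMeasure T X) {G : T → Y}
    (hG : IsSimpleFn G) {B : Set Y} {s : Finset Y} (hsB : ↑s ⊆ B) (hBs : B ∩ range G ⊆ s) :
    μ (G ⁻¹' B) = ∑ y ∈ s, μ (G ⁻¹' {y}) := by
  rw [← VectorMeasure.of_biUnion_finset (pairwiseDisjoint_fiber G s) fun y _ => hG.2 y]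
  congr 1
  ext t
  simp only [mem_preimage, mem_iUnion, mem_singleton_iff, exists_prop, exists_eq_right']
  exact ⟨fun ht => hBs ⟨ht, t, rfl⟩, fun ht => hsB ht⟩

section SimpleIntegral

variable {T Y : Type*} [MeasurableSpace T] {𝕜 X : Type*} [RCLike 𝕜] [NormedAddCommGroup X]
  [InnerProductSpace 𝕜 X]

local notation "⟪" x ", " y "⟫" => @inner 𝕜 _ _ x y

theorem simpleIntegral_comp_eq_sum (μ : VectorMeasure T X) {G : T → Y} (hG : IsSimpleFn G)
    (φ : Y → X) {s : Finset Y} (hs : range G ⊆ s) :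
    simpleIntegral 𝕜 μ (φ ∘ G) = ∑ y ∈ s, ⟪φ y, μ (G ⁻¹' {y})⟫ := by
  classical
  have hfiber (x : X) : μ ((φ ∘ G) ⁻¹' {x}) = ∑ y ∈ s with φ y = x, μ (G ⁻¹' {y}) :=
    μ.apply_preimage_eq_sum (B := φ ⁻¹' {x}) hG (fun y hy => (Finset.mem_filter.1 hy).2)
      (by rintro _ ⟨hx, t, rfl⟩; exact Finset.mem_filter.2 ⟨hs ⟨t, rfl⟩, hx⟩)
  rw [simpleIntegral, finsum_eq_sum_of_support_subset (s := s.image φ)]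
  · simp_rw [hfiber, inner_sum]
    rw [← Finset.sum_fiberwise_of_maps_to fun y hy => Finset.mem_image_of_mem φ hy]
    refine Finset.sum_congr rfl fun x _ => Finset.sum_congr rfl fun y hy => ?_
    rw [(Finset.mem_filter.1 hy).2]
  · intro x hx
    by_contra hxs
    apply hx
    dsimp only
    rw [hfiber, Finset.filter_false_of_mem, Finset.sum_empty, inner_zero_right]
    exact fun y hy hyx => hxs (hyx ▸ Finset.mem_image_of_mem φ hy)

theorem simpleIntegral_eq_sum (μ : VectorMeasure T X) {g : T → X} (hg : IsSimpleFn g)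
    {s : Finset X} (hs : range g ⊆ s) :
    simpleIntegral 𝕜 μ g = ∑ x ∈ s, ⟪x, μ (g ⁻¹' {x})⟫ :=
  simpleIntegral_comp_eq_sum μ hg id hs

theorem simpleIntegral_sub (μ : VectorMeasure T X) {g h : T → X} (hg : IsSimpleFn g)
    (hh : IsSimpleFn h) :
    simpleIntegral 𝕜 μ (g - h) = simpleIntegral 𝕜 μ g - simpleIntegral 𝕜 μ h := by
  set G : T → X × X := fun t => (g t, h t)
  have hG : IsSimpleFn G := hg.prodMk hh
  have hs : range G ⊆ hG.1.toFinset := by simp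
  have e : simpleIntegral 𝕜 μ (g - h) = ∑ p ∈ hG.1.toFinset, ⟪p.1 - p.2, μ (G ⁻¹' {p})⟫ :=
    simpleIntegral_comp_eq_sum μ hG (fun p => p.1 - p.2) hs
  have e₁ : simpleIntegral 𝕜 μ g = ∑ p ∈ hG.1.toFinset, ⟪p.1, μ (G ⁻¹' {p})⟫ :=
    simpleIntegral_comp_eq_sum μ hG Prod.fst hs
  have e₂ : simpleIntegral 𝕜 μ h = ∑ p ∈ hG.1.toFinset, ⟪p.2, μ (G ⁻¹' {p})⟫ :=
    simpleIntegral_comp_eq_sum μ hG Prod.snd hs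
  simp_rw [e, e₁, e₂, ← Finset.sum_sub_distrib, inner_sub_left]

theorem norm_simpleIntegral_le {μ : VectorMeasure T X} (hμ : BddVar μ) {g : T → X}
    (hg : IsSimpleFn g) {c : ℝ} (hc : 0 ≤ c) (hgc : ∀ t, ‖g t‖ ≤ c) :
    ‖simpleIntegral 𝕜 μ g‖ ≤ c * varNorm μ := by
  have hs : range g ⊆ hg.1.toFinset := by simp
  rw [simpleIntegral_eq_sum μ hg hs]
  calc ‖∑ x ∈ hg.1.toFinset, ⟪x, μ (g ⁻¹' {x})⟫‖
      ≤ ∑ x ∈ hg.1.toFinset, c * ‖μ (g ⁻¹' {x})‖ := by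
        refine (norm_sum_le _ _).trans (Finset.sum_le_sum fun x hx => ?_)
        obtain ⟨t, rfl⟩ : x ∈ range g := by simpa using hx
        exact (norm_inner_le_norm _ _).trans (by gcongr; exact hgc t)
    _ ≤ c * varNorm μ := by
        rw [← Finset.mul_sum]
        exact mul_le_mul_of_nonneg_left
          (sum_norm_le_varNorm_s6 hμ (fun x _ => hg.2 x) (pairwiseDisjoint_fiber g _)) hc

theorem simpleIntegral_smul (μ : VectorMeasure T X) {g : T → X} (hg : IsSimpleFn g) (c : 𝕜) :
    simpleIntegral 𝕜 μ (fun t => c • g t) = conj c * simpleIntegral 𝕜 μ g := by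
  have hs : range g ⊆ hg.1.toFinset := by simp
  refine (simpleIntegral_comp_eq_sum μ hg (c • ·) hs).trans ?_
  simp_rw [simpleIntegral_eq_sum μ hg hs, Finset.mul_sum, inner_smul_left]

theorem simpleIntegral_add_const (μ : VectorMeasure T X) {g : T → X} (hg : IsSimpleFn g)
    (c : X) : simpleIntegral 𝕜 μ (fun t => g t + c) = simpleIntegral 𝕜 μ g + ⟪c, μ univ⟫ := by
  have hs : range g ⊆ hg.1.toFinset := by simp
  have huniv : μ univ = ∑ x ∈ hg.1.toFinset, μ (g ⁻¹' {x}) :=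
    μ.apply_preimage_eq_sum hg (subset_univ _) (inter_subset_right.trans hs)
  refine (simpleIntegral_comp_eq_sum μ hg (· + c) hs).trans ?_
  simp_rw [simpleIntegral_eq_sum μ hg hs, huniv, inner_sum, ← Finset.sum_add_distrib,
    inner_add_left]

theorem simpleIntegral_finsetSum_measure {ι : Type*} (s : Finset ι) (ν : ι → VectorMeasure T X)
    {g : T → X} (hg : IsSimpleFn g) :
    simpleIntegral 𝕜 (∑ i ∈ s, ν i) g = ∑ i ∈ s, simpleIntegral 𝕜 (ν i) g := by
  have hs : range g ⊆ hg.1.toFinset := by simp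
  simp_rw [simpleIntegral_eq_sum _ hg hs, FunLike.coe_sum, Finset.sum_apply, inner_sum]
  exact Finset.sum_comm

theorem simpleIntegral_opComp_map_s6 [CompleteSpace X] (μ : VectorMeasure T X) (R : X →L[𝕜] X)
    {ω : T → T} (hω : Measurable ω) {g : T → X} (hg : IsSimpleFn g) :
    simpleIntegral 𝕜 (opComp R (μ.map ω)) g = simpleIntegral 𝕜 μ (R† ∘ (g ∘ ω)) := by
  have hs : range g ⊆ hg.1.toFinset := by simp
  rw [simpleIntegral_eq_sum _ hg hs, simpleIntegral_comp_eq_sum μ (hg.comp_measurable hω) _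
    ((range_comp_subset_range ω g).trans hs)]
  refine Finset.sum_congr rfl fun x _ => ?_
  change ⟪x, R (μ.map ω (g ⁻¹' {x}))⟫ = _
  rw [VectorMeasure.map_apply _ hω (hg.2 x)]
  exact (R.adjoint_inner_left _ x).symm

end SimpleIntegral

section UniformIntegral

variable {T : Type*} [MeasurableSpace T] {𝕜 X : Type*} [RCLike 𝕜] [NormedAddCommGroup X]
  [InnerProductSpace 𝕜 X]

local notation "⟪" x ", " y "⟫" => @inner 𝕜 _ _ x y

theorem exists_simpleFunc_dist_lt [TopologicalSpace T] [OpensMeasurableSpace T] {f : T → X}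
    (hf : Continuous f) (hfr : TotallyBounded (range f)) {ε : ℝ} (hε : 0 < ε) :
    ∃ g : SimpleFunc T X, ∀ t, dist (g t) (f t) < ε := by
  classical
  have key (N : Finset X) : ∃ g : SimpleFunc T X,
      ∀ t, f t ∈ ⋃ y ∈ N, Metric.ball y ε → dist (g t) (f t) < ε := by
    induction N using Finset.induction_on with
    | empty => exact ⟨0, by simp⟩
    | insert y N _ ih =>
      obtain ⟨g, hg⟩ := ih
      refine ⟨.piecewise (f ⁻¹' Metric.ball y ε) (Metric.isOpen_ball.preimage hf).measurableSet
        (.const T y) g, fun t ht => ?_⟩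
      by_cases hy : f t ∈ Metric.ball y ε
      · rw [SimpleFunc.piecewise_apply, mem_preimage, if_pos hy, SimpleFunc.const_apply, dist_comm]
        exact hy
      · rw [SimpleFunc.piecewise_apply, mem_preimage, if_neg hy]
        exact hg t (by simpa [hy] using ht)
  obtain ⟨N, hN, hcover⟩ := Metric.totallyBounded_iff.1 hfr ε hε
  obtain ⟨g, hg⟩ := key hN.toFinset
  exact ⟨g, fun t => hg t (by simpa using hcover ⟨t, rfl⟩)⟩

theorem tendsto_simpleIntegral_zero {μ : VectorMeasure T X} (hμ : BddVar μ) {ι : Type*}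
    {l : Filter ι} {k : ι → T → X} (hk : ∀ i, IsSimpleFn (k i)) (hk0 : TendstoUniformly k 0 l) :
    Tendsto (fun i => simpleIntegral 𝕜 μ (k i)) l (𝓝 0) := by
  have hV : 0 ≤ varNorm μ := ENNReal.toReal_nonneg
  refine NormedAddGroup.tendsto_nhds_zero.2 fun ε hε => ?_
  filter_upwards [Metric.tendstoUniformly_iff.1 hk0 (ε / (varNorm μ + 1)) (by positivity)]
    with i hi
  calc ‖simpleIntegral 𝕜 μ (k i)‖ ≤ ε / (varNorm μ + 1) * varNorm μ :=
        norm_simpleIntegral_le hμ (hk i) (by positivity) fun t => by simpa using (hi t).le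
    _ < ε := by
        rw [div_mul_eq_mul_div, div_lt_iff₀ (by positivity)]
        nlinarith

theorem tendsto_simpleIntegral_sub {μ : VectorMeasure T X} (hμ : BddVar μ) {ι : Type*}
    {l : Filter ι} {f : T → X} {g h : ι → T → X} (hg : ∀ i, IsSimpleFn (g i))
    (hh : ∀ i, IsSimpleFn (h i)) (hgf : TendstoUniformly g f l) (hhf : TendstoUniformly h f l) :
    Tendsto (fun i => simpleIntegral 𝕜 μ (g i) - simpleIntegral 𝕜 μ (h i)) l (𝓝 0) := by
  simp_rw [← simpleIntegral_sub μ (hg _) (hh _)]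
  refine tendsto_simpleIntegral_zero hμ (k := g - h)
    (fun i => ((hg i).prodMk (hh i)).comp fun p => p.1 - p.2) ?_
  simpa only [sub_self] using hgf.sub hhf

variable [TopologicalSpace T] [CompactSpace T] [OpensMeasurableSpace T]

theorem exists_seq_isSimpleFn_tendstoUniformly {f : T → X} (hf : Continuous f) :
    ∃ g : ℕ → T → X, (∀ n, IsSimpleFn (g n)) ∧ TendstoUniformly g f atTop := by
  choose g hg using fun n : ℕ => exists_simpleFunc_dist_lt hf (isCompact_range hf).totallyBounded
    (Nat.one_div_pos_of_nat (n := n))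
  refine ⟨fun n => g n, fun n => (g n).isSimpleFn_s6, Metric.tendstoUniformly_iff.2 fun ε hε => ?_⟩
  obtain ⟨N, hN⟩ := exists_nat_one_div_lt hε
  filter_upwards [eventually_ge_atTop N] with n hn t
  rw [dist_comm]
  refine (hg n t).trans (lt_of_le_of_lt ?_ hN)
  gcongr

theorem hasUIntegral_uIntegral {μ : VectorMeasure T X} (hμ : BddVar μ) {f : T → X}
    (hf : Continuous f) : HasUIntegral 𝕜 μ f (uIntegral 𝕜 μ f) := by
  suffices h : ∃ I, HasUIntegral 𝕜 μ f I by
    rw [uIntegral, dif_pos h]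
    exact h.choose_spec
  obtain ⟨g, hg, hgf⟩ := exists_seq_isSimpleFn_tendstoUniformly hf
  have hcauchy : CauchySeq fun n => simpleIntegral 𝕜 μ (g n) := by
    rw [cauchySeq_iff_tendsto_dist_atTop_0, ← prod_atTop_atTop_eq]
    simpa [dist_eq_norm] using (tendsto_simpleIntegral_sub (𝕜 := 𝕜) hμ (fun p : ℕ × ℕ => hg p.1)
      (fun p => hg p.2) (fun u hu => tendsto_fst.eventually (hgf u hu))
      (fun u hu => tendsto_snd.eventually (hgf u hu))).norm
  obtain ⟨I, hI⟩ := cauchySeq_tendsto_of_complete hcauchy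
  refine ⟨I, fun h hh hhf => ?_⟩
  simpa using (tendsto_simpleIntegral_sub hμ hh hg hhf hgf).add hI

theorem HasUIntegral.uIntegral_eq {μ : VectorMeasure T X} {f : T → X} {I : 𝕜}
    (hI : HasUIntegral 𝕜 μ f I) (hf : Continuous f) : uIntegral 𝕜 μ f = I := by
  obtain ⟨g, hg, hgf⟩ := exists_seq_isSimpleFn_tendstoUniformly hf
  have hex : ∃ J, HasUIntegral 𝕜 μ f J := ⟨I, hI⟩
  rw [uIntegral, dif_pos hex]
  exact tendsto_nhds_unique (hex.choose_spec g hg hgf) (hI g hg hgf)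

theorem uIntegral_comp_eq {μ : VectorMeasure T X} (hμ : BddVar μ) {φ : X → X}
    (hφ : UniformContinuous φ) {F : 𝕜 → 𝕜} (hF : Continuous F)
    (hφF : ∀ g : T → X, IsSimpleFn g → simpleIntegral 𝕜 μ (φ ∘ g) = F (simpleIntegral 𝕜 μ g))
    {f : T → X} (hf : Continuous f) : uIntegral 𝕜 μ (φ ∘ f) = F (uIntegral 𝕜 μ f) := by
  obtain ⟨g, hg, hgf⟩ := exists_seq_isSimpleFn_tendstoUniformly hf
  refine tendsto_nhds_unique (hasUIntegral_uIntegral hμ (hφ.continuous.comp hf) (φ ∘ g ·)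
    (fun n => (hg n).comp φ) (hφ.comp_tendstoUniformly hgf)) ?_
  simp_rw [hφF _ (hg _)]
  exact (hF.tendsto _).comp (hasUIntegral_uIntegral hμ hf g hg hgf)

theorem uIntegral_smul {μ : VectorMeasure T X} (hμ : BddVar μ) {f : T → X} (hf : Continuous f)
    (c : 𝕜) : uIntegral 𝕜 μ (fun t => c • f t) = conj c * uIntegral 𝕜 μ f :=
  uIntegral_comp_eq hμ (uniformContinuous_const_smul c) (continuous_const_mul _)
    (fun _ hg => simpleIntegral_smul μ hg c) hf

theorem uIntegral_add_const {μ : VectorMeasure T X} (hμ : BddVar μ) {f : T → X}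
    (hf : Continuous f) (c : X) :
    uIntegral 𝕜 μ (fun t => f t + c) = uIntegral 𝕜 μ f + ⟪c, μ univ⟫ :=
  uIntegral_comp_eq hμ (uniformContinuous_id.add uniformContinuous_const) (continuous_add_const _)
    (fun _ hg => simpleIntegral_add_const μ hg c) hf

theorem uIntegral_sub_const {μ : VectorMeasure T X} (hμ : BddVar μ) (h0 : μ univ = 0)
    {f : T → X} (hf : Continuous f) (c : X) :
    uIntegral 𝕜 μ (fun t => f t - c) = uIntegral 𝕜 μ f := by
  have := uIntegral_add_const (𝕜 := 𝕜) hμ (f := fun t => f t - c) (hf.sub continuous_const) c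
  simpa only [sub_add_cancel, h0, inner_zero_right, add_zero] using this.symm

theorem norm_uIntegral_le {μ : VectorMeasure T X} (hμ : BddVar μ) {f : T → X}
    (hf : Continuous f) {c : ℝ} (hc : 0 ≤ c) (hfc : ∀ t, ‖f t‖ ≤ c) :
    ‖uIntegral 𝕜 μ f‖ ≤ c * varNorm μ := by
  obtain ⟨g, hg, hgf⟩ := exists_seq_isSimpleFn_tendstoUniformly hf
  have hV : 0 ≤ varNorm μ := ENNReal.toReal_nonneg
  refine le_of_forall_pos_le_add fun ε hε =>
    le_of_tendsto (hasUIntegral_uIntegral hμ hf g hg hgf).norm ?_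
  filter_upwards [Metric.tendstoUniformly_iff.1 hgf (ε / (varNorm μ + 1)) (by positivity)]
    with n hn
  have hgn (t : T) : ‖g n t‖ ≤ c + ε / (varNorm μ + 1) := by
    refine (norm_le_norm_add_norm_sub' _ (f t)).trans (add_le_add (hfc t) ?_)
    rw [← dist_eq_norm, dist_comm]
    exact (hn t).le
  calc ‖simpleIntegral 𝕜 μ (g n)‖ ≤ (c + ε / (varNorm μ + 1)) * varNorm μ :=
        norm_simpleIntegral_le hμ (hg n) (by positivity) hgn
    _ ≤ c * varNorm μ + ε := by
        rw [add_mul, div_mul_eq_mul_div]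
        gcongr
        rw [div_le_iff₀ (by positivity)]
        nlinarith

end UniformIntegral

section MongeKantorovich

variable {T : Type*} [PseudoMetricSpace T] [MeasurableSpace T] {𝕜 X : Type*} [RCLike 𝕜]
  [NormedAddCommGroup X] [InnerProductSpace 𝕜 X] {μ : VectorMeasure T X}

theorem mkNormStar_le {b : ℝ} (h : ∀ f : T → X, LipschitzWith 1 f → ‖uIntegral 𝕜 μ f‖ ≤ b) :
    mkNormStar 𝕜 μ ≤ b :=
  csSup_le ⟨_, 0, LipschitzWith.const' 0, rfl⟩ fun _ ⟨f, hf, hs⟩ => hs ▸ h f hf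

variable [CompactSpace T] [OpensMeasurableSpace T]

theorem norm_uIntegral_le_of_lipschitzWith (hμ : BddVar μ) (h0 : μ univ = 0) {f : T → X}
    {L : ℝ≥0} (hf : LipschitzWith L f) :
    ‖uIntegral 𝕜 μ f‖ ≤ L * Metric.diam (univ : Set T) * varNorm μ := by
  have hc : 0 ≤ (L : ℝ) * Metric.diam (univ : Set T) := mul_nonneg L.2 Metric.diam_nonneg
  rcases isEmpty_or_nonempty T with hT | ⟨⟨t₀⟩⟩
  · exact norm_uIntegral_le hμ hf.continuous hc isEmptyElim
  · rw [← uIntegral_sub_const hμ h0 hf.continuous (f t₀)]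
    refine norm_uIntegral_le (f := fun t => f t - f t₀) hμ (hf.continuous.sub continuous_const) hc
      fun t => ?_
    rw [← dist_eq_norm]
    exact (hf.dist_le_mul t t₀).trans (by
      gcongr
      exact Metric.dist_le_diam_of_mem isCompact_univ.isBounded (mem_univ t) (mem_univ t₀))

theorem norm_uIntegral_le_mkNormStar (hμ : BddVar μ) (h0 : μ univ = 0) {f : T → X}
    (hf : LipschitzWith 1 f) : ‖uIntegral 𝕜 μ f‖ ≤ mkNormStar 𝕜 μ := by
  refine le_csSup ⟨Metric.diam (univ : Set T) * varNorm μ, ?_⟩ ⟨f, hf, rfl⟩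
  rintro _ ⟨g, hg, rfl⟩
  simpa using norm_uIntegral_le_of_lipschitzWith hμ h0 hg

theorem norm_uIntegral_le_mul_mkNormStar (hμ : BddVar μ) (h0 : μ univ = 0) {f : T → X}
    {L : ℝ≥0} (hf : LipschitzWith L f) : ‖uIntegral 𝕜 μ f‖ ≤ L * mkNormStar 𝕜 μ := by
  rcases eq_or_ne L 0 with rfl | hL
  · simpa using norm_uIntegral_le_of_lipschitzWith (𝕜 := 𝕜) hμ h0 hf
  set c : 𝕜 := ((L : ℝ) : 𝕜)⁻¹
  have hc : ‖c‖₊ * L = 1 := by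
    ext
    simp [c, hL]
  have hcf : LipschitzWith 1 fun t => c • f t := hc ▸ (lipschitzWith_smul c).comp hf
  have := norm_uIntegral_le_mkNormStar (𝕜 := 𝕜) hμ h0 hcf
  rwa [uIntegral_smul hμ hf.continuous, norm_mul, RCLike.norm_conj, norm_inv, RCLike.norm_ofReal,
    NNReal.abs_eq, inv_mul_le_iff₀ (by positivity)] at this

end MongeKantorovich

section Markov

variable {T : Type*} [MeasurableSpace T] {𝕜 X : Type*} {M : ℕ}

theorem markovH_apply_univ [NontriviallyNormedField 𝕜] [NormedAddCommGroup X] [NormedSpace 𝕜 X]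
    (R : Fin M → X →L[𝕜] X) {ω : Fin M → T → T} (hω : ∀ i, Measurable (ω i))
    (μ : VectorMeasure T X) : markovH R ω μ univ = (∑ i, R i) (μ univ) := by
  rw [markovH, FunLike.coe_sum, Finset.sum_apply, sum_apply]
  refine Finset.sum_congr rfl fun i _ => ?_
  change R i (μ.map (ω i) univ) = _
  rw [VectorMeasure.map_apply _ (hω i) .univ, preimage_univ]

variable [TopologicalSpace T] [CompactSpace T] [BorelSpace T] [RCLike 𝕜] [NormedAddCommGroup X]
  [InnerProductSpace 𝕜 X] [CompleteSpace X]

theorem hasUIntegral_markovH (R : Fin M → X →L[𝕜] X) {ω : Fin M → T → T}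
    (hω : ∀ i, Continuous (ω i)) {μ : VectorMeasure T X} (hμ : BddVar μ) {f : T → X}
    (hf : Continuous f) :
    HasUIntegral 𝕜 (markovH R ω μ) f (∑ i, uIntegral 𝕜 μ ((R i)† ∘ (f ∘ ω i))) := by
  intro g hg hgf
  simp_rw [markovH, simpleIntegral_finsetSum_measure _ _ (hg _),
    simpleIntegral_opComp_map_s6 μ _ (hω _).measurable (hg _)]
  refine tendsto_finsetSum _ fun i _ => hasUIntegral_uIntegral hμ
    (((R i)†).continuous.comp (hf.comp (hω i))) _
    (fun n => ((hg n).comp_measurable (hω i).measurable).comp _) ?_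
  exact ((R i)†).uniformContinuous.comp_tendstoUniformly (hgf.comp (ω i))

end Markov

/-- if `μ(T) = 0` then `H(μ)(T) = 0`, so `H` restricts to `cabv(X,0)`, and
for the modified Monge–Kantorovich norm `‖H(μ)‖*_MK ≤ (∑ ‖R_i‖ r_i) ‖μ‖*_MK`. -/
theorem markovH_mkNormStar_bound
    {T : Type*} [MetricSpace T] [CompactSpace T] [MeasurableSpace T] [BorelSpace T]
    {𝕜 X : Type*} [RCLike 𝕜] [NormedAddCommGroup X] [InnerProductSpace 𝕜 X] [CompleteSpace X]
    {M : ℕ} (ω : Fin M → T → T) (r : Fin M → NNReal)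
    (hω : ∀ i, LipschitzWith (r i) (ω i)) (R : Fin M → X →L[𝕜] X)
    (μ : VectorMeasure T X) (hμ : BddVar μ) (h0 : μ Set.univ = 0) :
    (markovH R ω μ) Set.univ = 0 ∧
      mkNormStar 𝕜 (markovH R ω μ) ≤ (∑ i, ‖R i‖ * (r i : ℝ)) * mkNormStar 𝕜 μ := by
  refine ⟨by rw [markovH_apply_univ R (fun i => (hω i).continuous.measurable), h0, map_zero],
    mkNormStar_le fun f hf => ?_⟩
  rw [(hasUIntegral_markovH R (fun i => (hω i).continuous) hμ hf.continuous).uIntegral_eq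
    hf.continuous, Finset.sum_mul]
  refine (norm_sum_le _ _).trans (Finset.sum_le_sum fun i _ => ?_)
  have hlip := ((R i)†).lipschitz.comp (hf.comp (hω i))
  simpa [LinearIsometryEquiv.norm_map] using norm_uIntegral_le_mul_mkNormStar hμ h0 hlip
end

section
/- Let T be a compact metric space, X a Hilbert space, t₁,...,t_M distinct points of T, and R₁,...,R_M ∈ L(X) with ∑_{i=1}^M ‖R_i‖ < 1. Let μ⁰ ∈ cabv(X) and define H₂(μ) = ∑_{i=1}^M δ_{t_i} R_i(μ(T)) + μ⁰. Then Id_X − R is invertible in L(X), where R = ∑ R_i, H₂ is a contraction on cabv(X), and its unique fixed point is μ* = ∑_{i=1}^M δ_{t_i} (R_i ∘ (Id_X − R)^{-1})(μ⁰(T)) + μ⁰. -/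
open MeasureTheory Filter Topology Set

/-!
`H₂(μ) = ∑ δ_{t_i} R_i(μ(T)) + μ⁰` depends on `μ` only through the total mass `μ(T)`, and
`‖μ(T)‖ ≤ var(μ)` while `var(δ_t x) ≤ ‖x‖`; hence `H₂` is Lipschitz with constant `∑ ‖R_i‖ < 1`
for the variational norm, which forces uniqueness of fixed points of bounded variation.
A fixed point `μ*` is determined by its total mass `m = μ*(T)`, which must satisfy
`m = R m + μ⁰(T)`, i.e. `m = (Id − R)⁻¹ μ⁰(T)`; the Neumann series makes `Id − R` invertible.
-/

open scoped ENNReal NNReal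

lemma mul_inverse_one_sub_add_one {A : Type*} [Ring A] {a : A} (h : IsUnit (1 - a)) :
    a * Ring.inverse (1 - a) + 1 = Ring.inverse (1 - a) := by
  have hinv := Ring.mul_inverse_cancel _ h
  rw [sub_mul, one_mul] at hinv
  exact (sub_eq_iff_eq_add'.mp hinv).symm

section TotalVariation

variable {T X : Type*} [MeasurableSpace T] [NormedAddCommGroup X]

lemma evar_neg (μ : VectorMeasure T X) : evar (-μ) = evar μ := by
  simp only [evar, neg_apply, nnnorm_neg]

lemma evar_add_le (μ ν : VectorMeasure T X) : evar (μ + ν) ≤ evar μ + evar ν := by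
  refine iSup₂_le fun P hP => ?_
  calc ∑ A ∈ P, (‖(μ + ν) A‖₊ : ℝ≥0∞)
      ≤ ∑ A ∈ P, ((‖μ A‖₊ : ℝ≥0∞) + ‖ν A‖₊) := Finset.sum_le_sum fun A _ => by
        rw [add_apply]; exact_mod_cast nnnorm_add_le _ _
    _ = (∑ A ∈ P, (‖μ A‖₊ : ℝ≥0∞)) + ∑ A ∈ P, (‖ν A‖₊ : ℝ≥0∞) := Finset.sum_add_distrib
    _ ≤ evar μ + evar ν := add_le_add (le_iSup₂_of_le P hP le_rfl) (le_iSup₂_of_le P hP le_rfl)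

lemma evar_zero : evar (0 : VectorMeasure T X) = 0 := by
  simp [evar]

lemma evar_sum_le {ι : Type*} (s : Finset ι) (μ : ι → VectorMeasure T X) :
    evar (∑ i ∈ s, μ i) ≤ ∑ i ∈ s, evar (μ i) := by
  induction s using Finset.cons_induction with
  | empty => simp [evar_zero]
  | cons i s hi ih =>
    rw [Finset.sum_cons, Finset.sum_cons]
    exact (evar_add_le _ _).trans (add_le_add le_rfl ih)

lemma isBorelPartition_pair {A : Set T} (hA : MeasurableSet A) :
    IsBorelPartition ({A, Aᶜ} : Finset (Set T)) := by
  refine ⟨?_, ?_, by simp⟩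
  · simp [hA, hA.compl]
  · simp only [Finset.coe_insert, Finset.coe_singleton]
    exact Set.pairwise_pair.mpr fun _ => ⟨disjoint_compl_right, disjoint_compl_left⟩

lemma nnnorm_apply_le_evar (μ : VectorMeasure T X) {A : Set T} (hA : MeasurableSet A) :
    (‖μ A‖₊ : ℝ≥0∞) ≤ evar μ := by
  rcases Set.eq_empty_or_nonempty A with rfl | ⟨a, ha⟩
  · simp
  have hne : A ≠ Aᶜ := fun h => (h ▸ ha : a ∈ Aᶜ) ha
  calc (‖μ A‖₊ : ℝ≥0∞) ≤ ∑ B ∈ ({A, Aᶜ} : Finset (Set T)), (‖μ B‖₊ : ℝ≥0∞) := by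
        rw [Finset.sum_pair hne]; exact le_self_add
    _ ≤ evar μ := le_iSup₂_of_le _ (isBorelPartition_pair hA) le_rfl

lemma BddVar.add {μ ν : VectorMeasure T X} (hμ : BddVar μ) (hν : BddVar ν) : BddVar (μ + ν) :=
  ne_top_of_le_ne_top (ENNReal.add_ne_top.mpr ⟨hμ, hν⟩) (evar_add_le μ ν)

lemma BddVar.neg {μ : VectorMeasure T X} (hμ : BddVar μ) : BddVar (-μ) := by
  rwa [BddVar, evar_neg]

lemma BddVar.sub {μ ν : VectorMeasure T X} (hμ : BddVar μ) (hν : BddVar ν) : BddVar (μ - ν) :=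
  sub_eq_add_neg μ ν ▸ hμ.add hν.neg

lemma BddVar.eq_zero_of_varNorm_eq_zero {μ : VectorMeasure T X} (hμ : BddVar μ)
    (h : varNorm μ = 0) : μ = 0 := by
  have hzero : evar μ = 0 := ((ENNReal.toReal_eq_zero_iff _).mp h).resolve_right hμ
  ext A hA
  simpa [hzero] using nnnorm_apply_le_evar μ hA

lemma eq_of_varNorm_sub_le_mul {μ ν : VectorMeasure T X} (hμ : BddVar μ) (hν : BddVar ν)
    {q : ℝ} (hq : q < 1) (h : varNorm (μ - ν) ≤ q * varNorm (μ - ν)) : μ = ν := by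
  have hnonneg : 0 ≤ varNorm (μ - ν) := ENNReal.toReal_nonneg
  have hzero : varNorm (μ - ν) = 0 := by nlinarith
  exact sub_eq_zero.mp ((hμ.sub hν).eq_zero_of_varNorm_eq_zero hzero)

end TotalVariation

section Dirac

variable {T : Type*} [MeasurableSpace T] {𝕜 X : Type*} [RCLike 𝕜]
  [NormedAddCommGroup X] [NormedSpace 𝕜 X]

lemma diracVM_apply (t : T) (x : X) {A : Set T} (hA : MeasurableSet A) :
    diracVM (𝕜 := 𝕜) t x A = A.indicator (fun _ => x) t := by
  by_cases h : t ∈ A <;>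
    simp [diracVM, Measure.toSignedMeasure_apply_measurable hA, Measure.real,
      Measure.dirac_apply' t hA, h]

lemma diracVM_apply_univ (t : T) (x : X) : diracVM (𝕜 := 𝕜) t x univ = x := by
  simp [diracVM_apply (𝕜 := 𝕜) t x MeasurableSet.univ]

lemma diracVM_sub (t : T) (x y : X) :
    diracVM (𝕜 := 𝕜) t x - diracVM (𝕜 := 𝕜) t y = diracVM (𝕜 := 𝕜) t (x - y) := by
  ext A hA
  rw [sub_apply, diracVM_apply t _ hA, diracVM_apply t _ hA, diracVM_apply t _ hA]
  by_cases h : t ∈ A <;> simp [h]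

lemma nnnorm_diracVM_apply (t : T) (x : X) {A : Set T} (hA : MeasurableSet A) :
    (‖diracVM (𝕜 := 𝕜) t x A‖₊ : ℝ≥0∞) = Measure.dirac t A * ‖x‖₊ := by
  rw [diracVM_apply t x hA, Measure.dirac_apply' t hA]
  by_cases h : t ∈ A <;> simp [h]

lemma evar_diracVM_le (t : T) (x : X) : evar (diracVM (𝕜 := 𝕜) t x) ≤ ‖x‖₊ := by
  refine iSup₂_le fun P ⟨hmeas, hdisj, _⟩ => ?_
  calc ∑ A ∈ P, (‖diracVM (𝕜 := 𝕜) t x A‖₊ : ℝ≥0∞)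
      = (∑ A ∈ P, Measure.dirac t A) * ‖x‖₊ := by
        rw [Finset.sum_mul]
        exact Finset.sum_congr rfl fun A hA => nnnorm_diracVM_apply t x (hmeas A hA)
    _ = Measure.dirac t (⋃ A ∈ P, id A) * ‖x‖₊ := by rw [measure_biUnion_finset hdisj hmeas]; rfl
    _ ≤ ‖x‖₊ := mul_le_of_le_one_left' prob_le_one

end Dirac

section DiracSum

variable {T : Type*} [MeasurableSpace T] {𝕜 X : Type*} [RCLike 𝕜]
  [NormedAddCommGroup X] [NormedSpace 𝕜 X] {ι : Type*} [Fintype ι]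

/-- In the paper's notation `H₂(μ) = diracSum t R (μ(T)) + μ⁰`. -/
noncomputable def diracSum (t : ι → T) (R : ι → X →L[𝕜] X) (x : X) : VectorMeasure T X :=
  ∑ i, diracVM (𝕜 := 𝕜) (t i) (R i x)

variable (t : ι → T) (R : ι → X →L[𝕜] X)

lemma diracSum_apply_univ (x : X) : diracSum t R x univ = (∑ i, R i) x := by
  simp [diracSum, diracVM_apply_univ]

lemma diracSum_sub (x y : X) : diracSum t R x - diracSum t R y = diracSum t R (x - y) := by
  simp only [diracSum, ← Finset.sum_sub_distrib, diracVM_sub, map_sub]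

lemma evar_diracSum_le (x : X) : evar (diracSum t R x) ≤ (∑ i, ‖R i‖₊) * ‖x‖₊ := by
  calc evar (diracSum t R x)
      ≤ ∑ i, evar (diracVM (𝕜 := 𝕜) (t i) (R i x)) := evar_sum_le _ _
    _ ≤ ∑ i, ((‖R i‖₊ * ‖x‖₊ : ℝ≥0) : ℝ≥0∞) := Finset.sum_le_sum fun i _ =>
        (evar_diracVM_le _ _).trans (by exact_mod_cast (R i).le_opNNNorm x)
    _ = (∑ i, ‖R i‖₊) * ‖x‖₊ := by push_cast; rw [Finset.sum_mul]

lemma bddVar_diracSum (x : X) : BddVar (diracSum t R x) :=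
  ne_top_of_le_ne_top (ENNReal.mul_ne_top (by simp) (by simp)) (evar_diracSum_le t R x)

lemma varNorm_diracSum_add_sub_le (μ0 : VectorMeasure T X) {μ ν : VectorMeasure T X}
    (hμν : BddVar (μ - ν)) :
    varNorm ((diracSum t R (μ univ) + μ0) - (diracSum t R (ν univ) + μ0)) ≤
      (∑ i, ‖R i‖) * varNorm (μ - ν) := by
  rw [add_sub_add_right_eq_sub, diracSum_sub, ← sub_apply]
  calc varNorm (diracSum t R ((μ - ν) univ))
      ≤ ((∑ i, ‖R i‖₊ : ℝ≥0) * evar (μ - ν)).toReal :=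
        ENNReal.toReal_mono (ENNReal.mul_ne_top (by simp) hμν) <|
          (evar_diracSum_le t R _).trans (by gcongr; exact nnnorm_apply_le_evar _ .univ)
    _ = (∑ i, ‖R i‖) * varNorm (μ - ν) := by
        rw [ENNReal.toReal_mul, ENNReal.coe_toReal, NNReal.coe_sum]; rfl

lemma apply_univ_diracSum_inverse_add (μ0 : VectorMeasure T X)
    (h : IsUnit ((1 : X →L[𝕜] X) - ∑ i, R i)) :
    (diracSum t R (Ring.inverse (1 - ∑ i, R i) (μ0 univ)) + μ0) univ =
      Ring.inverse (1 - ∑ i, R i) (μ0 univ) := by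
  have hmass := congrArg (fun f : X →L[𝕜] X => f (μ0 univ)) (mul_inverse_one_sub_add_one h)
  simp only [add_apply, mul_apply_eq_comp, one_apply_eq_self] at hmass
  rw [add_apply, diracSum_apply_univ]
  exact hmass

end DiracSum

theorem constant_maps_fixed_point_general
    {T : Type*} [MeasurableSpace T]
    {𝕜 X : Type*} [RCLike 𝕜] [NormedAddCommGroup X] [InnerProductSpace 𝕜 X] [CompleteSpace X]
    {M : ℕ} (t : Fin M → T)
    (R : Fin M → X →L[𝕜] X) (he : (∑ i, ‖R i‖) < 1)
    (μ0 : VectorMeasure T X) (hμ0 : BddVar μ0) :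
    IsUnit ((1 : X →L[𝕜] X) - ∑ i, R i) ∧
    (∀ μ ν : VectorMeasure T X, BddVar μ → BddVar ν →
      varNorm ((∑ i, diracVM (𝕜 := 𝕜) (t i) ((R i) (μ Set.univ)) + μ0) -
          (∑ i, diracVM (𝕜 := 𝕜) (t i) ((R i) (ν Set.univ)) + μ0)) ≤
        (∑ i, ‖R i‖) * varNorm (μ - ν)) ∧
    (∃! μs : VectorMeasure T X, BddVar μs ∧
      ∑ i, diracVM (𝕜 := 𝕜) (t i) ((R i) (μs Set.univ)) + μ0 = μs) ∧
    (∀ μs : VectorMeasure T X,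
      μs = ∑ i, diracVM (𝕜 := 𝕜) (t i)
          ((R i) ((Ring.inverse ((1 : X →L[𝕜] X) - ∑ j, R j)) (μ0 Set.univ))) + μ0 →
      ∑ i, diracVM (𝕜 := 𝕜) (t i) ((R i) (μs Set.univ)) + μ0 = μs) := by
  have hunit : IsUnit ((1 : X →L[𝕜] X) - ∑ i, R i) :=
    isUnit_one_sub_of_norm_lt_one ((norm_sum_le _ _).trans_lt he)
  have hcontr : ∀ μ ν : VectorMeasure T X, BddVar μ → BddVar ν →
      varNorm ((diracSum t R (μ univ) + μ0) - (diracSum t R (ν univ) + μ0)) ≤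
        (∑ i, ‖R i‖) * varNorm (μ - ν) :=
    fun μ ν hμ hν => varNorm_diracSum_add_sub_le t R μ0 (hμ.sub hν)
  set m := Ring.inverse ((1 : X →L[𝕜] X) - ∑ j, R j) (μ0 univ)
  have hfix : diracSum t R ((diracSum t R m + μ0) univ) + μ0 = diracSum t R m + μ0 := by
    rw [apply_univ_diracSum_inverse_add t R μ0 hunit]
  have hbdd : BddVar (diracSum t R m + μ0) := (bddVar_diracSum t R m).add hμ0
  refine ⟨hunit, hcontr, ⟨_, ⟨hbdd, hfix⟩, ?_⟩, fun μs hμs => hμs ▸ hfix⟩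
  rintro ν ⟨hν, hνfix : diracSum t R (ν univ) + μ0 = ν⟩
  refine eq_of_varNorm_sub_le_mul hν hbdd he ?_
  simpa only [hνfix, hfix] using hcontr ν _ hν hbdd

/-- with constant maps `ω_i ≡ t_i` and `∑ ‖R_i‖ < 1`,
`H₂(μ) = ∑ δ_{t_i} R_i(μ(T)) + μ⁰` is a contraction on `cabv(X)`, `Id − R` is invertible
(`R = ∑ R_i`), and the unique fixed point is
`μ* = ∑ δ_{t_i}(R_i ∘ (Id − R)⁻¹)(μ⁰(T)) + μ⁰`. -/
theorem constant_maps_fixed_point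
    {T : Type*} [MetricSpace T] [CompactSpace T] [MeasurableSpace T] [BorelSpace T]
    {𝕜 X : Type*} [RCLike 𝕜] [NormedAddCommGroup X] [InnerProductSpace 𝕜 X] [CompleteSpace X]
    {M : ℕ} (t : Fin M → T) (ht : Function.Injective t)
    (R : Fin M → X →L[𝕜] X) (he : (∑ i, ‖R i‖) < 1)
    (μ0 : VectorMeasure T X) (hμ0 : BddVar μ0) :
    IsUnit ((1 : X →L[𝕜] X) - ∑ i, R i) ∧
    (∀ μ ν : VectorMeasure T X, BddVar μ → BddVar ν →
      varNorm ((∑ i, diracVM (𝕜 := 𝕜) (t i) ((R i) (μ Set.univ)) + μ0) -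
          (∑ i, diracVM (𝕜 := 𝕜) (t i) ((R i) (ν Set.univ)) + μ0)) ≤
        (∑ i, ‖R i‖) * varNorm (μ - ν)) ∧
    (∃! μs : VectorMeasure T X, BddVar μs ∧
      ∑ i, diracVM (𝕜 := 𝕜) (t i) ((R i) (μs Set.univ)) + μ0 = μs) ∧
    (∀ μs : VectorMeasure T X,
      μs = ∑ i, diracVM (𝕜 := 𝕜) (t i)
          ((R i) ((Ring.inverse ((1 : X →L[𝕜] X) - ∑ j, R j)) (μ0 Set.univ))) + μ0 →
      ∑ i, diracVM (𝕜 := 𝕜) (t i) ((R i) (μs Set.univ)) + μ0 = μs) :=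
  constant_maps_fixed_point_general t R he μ0 hμ0
end
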